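/- arXiv:2103.12516 — 3 statements merged into one kernel-verified Lean document; each statement's English description precedes it below -/
import Mathlib

section
/- Let T > 0, V > 0 and θ > 0, and let (R_t)_{t≥0} be independent, identically distributed nonnegative real random variables on a probability space. Define the cumulative arrival process A(j,i) = V·(i−j)·T, the cumulative service process C(j,i) = Σ_{t=j}^{i−1} R_t·T, and the departure process A*(0,m) = min_{0≤j≤m} ( A(0,j) + C(j,m) ). If the stability condition V ≤ −ln E[e^{−θ R_0 T}] / (θ T) holds, then for every natural number i and every natural number k, Pr{ A(0,i) > A*(0,i+k) } ≤ ( E[e^{−θ R_0 T}] )^k. -/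
/-!
Set `M n = exp (θ (A(i - n, i) - C(i - n, i + k)))`. The data of block `i` is still queued
after block `i + k` exactly when `M n > 1` for some `n ≤ i`. Going back one block multiplies
`M` by `e^{θVT} e^{-θ R T}` for a fresh service variable `R`, a factor that is independent of
the past and has mean at most `1` by the stability condition. So `M` is a nonnegative
supermartingale, and the maximal inequality for such processes bounds the probability of
reaching level `1` by `E[M 0] = E[e^{-θ R₀ T}]^k`.
-/

open MeasureTheory ProbabilityTheory Finset
open scoped ENNReal

namespace MeasureTheory

variable {Ω : Type*} {m0 : MeasurableSpace Ω} {μ : Measure Ω}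

theorem setLIntegral_mul_le_of_indep {m : MeasurableSpace Ω} (hm : m ≤ m0) {s : Set Ω}
    (hs : MeasurableSet[m] s) {f g : Ω → ℝ≥0∞} (hf : Measurable[m] f) (hg : Measurable[m0] g)
    (hfg : Indep m (MeasurableSpace.comap g inferInstance) μ) (hg_le : ∫⁻ ω, g ω ∂μ ≤ 1) :
    ∫⁻ ω in s, f ω * g ω ∂μ ≤ ∫⁻ ω in s, f ω ∂μ :=
  calc ∫⁻ ω in s, f ω * g ω ∂μ = ∫⁻ ω, s.indicator f ω * g ω ∂μ := by
        rw [← lintegral_indicator (hm s hs)]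
        simp only [Set.indicator_mul_left]
    _ = (∫⁻ ω in s, f ω ∂μ) * ∫⁻ ω, g ω ∂μ := by
        rw [lintegral_mul_eq_lintegral_mul_lintegral_of_independent_measurableSpace hm
          (measurable_iff_comap_le.1 hg) hfg (hf.indicator hs) (comap_measurable g),
          lintegral_indicator (hm s hs)]
    _ ≤ ∫⁻ ω in s, f ω ∂μ := mul_le_of_le_one_right' hg_le

def beforeCrossing (M : ℕ → Ω → ℝ≥0∞) (n : ℕ) : Set Ω := {ω | ∀ l < n, M l ω < 1}

variable {M Y : ℕ → Ω → ℝ≥0∞} {n : ℕ}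

@[simp]
theorem beforeCrossing_zero : beforeCrossing M 0 = Set.univ := by
  simp [beforeCrossing]

theorem beforeCrossing_succ (n : ℕ) :
    beforeCrossing M (n + 1) = beforeCrossing M n ∩ {ω | M n ω < 1} := by
  ext ω
  simp only [beforeCrossing, Set.mem_ofPred_eq, Set.mem_inter_iff, Nat.lt_succ_iff_lt_or_eq,
    or_imp, forall_and, forall_eq]

theorem compl_beforeCrossing_succ (N : ℕ) :
    (beforeCrossing M (N + 1))ᶜ = {ω | ∃ n ≤ N, 1 ≤ M n ω} := by
  ext ω
  simp [beforeCrossing]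

/-- The paths crossing level `1` at time `n` leave the integral term, to which they contributed
at least their measure, and enter the measure term. -/
theorem measure_compl_add_setLIntegral_beforeCrossing_succ_le (hMn : Measurable (M n)) :
    μ (beforeCrossing M (n + 1))ᶜ + ∫⁻ ω in beforeCrossing M (n + 1), M n ω ∂μ ≤
      μ (beforeCrossing M n)ᶜ + ∫⁻ ω in beforeCrossing M n, M n ω ∂μ := by
  set S := beforeCrossing M n
  set B := {ω | M n ω < 1}
  have hB : MeasurableSet B := measurableSet_lt hMn measurable_const
  have hcrossed : μ (S \ B) ≤ ∫⁻ ω in S \ B, M n ω ∂μ := by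
    rw [← setLIntegral_one]
    exact setLIntegral_mono hMn fun ω hω => not_lt.1 hω.2
  have hcompl : (S ∩ B)ᶜ = Sᶜ ∪ S \ B := by
    ext; simp only [Set.mem_compl_iff, Set.mem_inter_iff, Set.mem_union, Set.mem_sdiff]; tauto
  rw [beforeCrossing_succ]
  calc μ (S ∩ B)ᶜ + ∫⁻ ω in S ∩ B, M n ω ∂μ
      ≤ μ Sᶜ + μ (S \ B) + ∫⁻ ω in S ∩ B, M n ω ∂μ := by
        rw [hcompl]; gcongr; exact measure_union_le _ _
    _ ≤ μ Sᶜ + (∫⁻ ω in S ∩ B, M n ω ∂μ + ∫⁻ ω in S \ B, M n ω ∂μ) := by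
        rw [add_assoc, add_comm (∫⁻ ω in S ∩ B, M n ω ∂μ)]; gcongr
    _ = μ Sᶜ + ∫⁻ ω in S, M n ω ∂μ := by rw [lintegral_inter_add_sdiff _ _ hB]

variable {ℱ : Filtration ℕ m0}

theorem measurableSet_beforeCrossing (hM : Adapted ℱ M) (n : ℕ) :
    MeasurableSet[ℱ n] (beforeCrossing M n) := by
  induction n with
  | zero => simp
  | succ n ih =>
    rw [beforeCrossing_succ]
    exact (ℱ.mono n.le_succ _ ih).inter
      (measurableSet_lt ((hM n).mono (ℱ.mono n.le_succ) le_rfl) measurable_const)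

theorem measure_exists_one_le_le_lintegral {N : ℕ} (hM : Adapted ℱ M)
    (hY : ∀ n < N, Measurable (Y n)) (hrec : ∀ n < N, M (n + 1) = M n * Y n)
    (hindep : ∀ n < N, Indep (ℱ n) (MeasurableSpace.comap (Y n) inferInstance) μ)
    (hmean : ∀ n < N, ∫⁻ ω, Y n ω ∂μ ≤ 1) :
    μ {ω | ∃ n ≤ N, 1 ≤ M n ω} ≤ ∫⁻ ω, M 0 ω ∂μ := by
  have hMm (n : ℕ) : Measurable (M n) := (hM n).mono (ℱ.le n) le_rfl
  -- `E[M (τ ∧ n)] ≤ E[M 0]` for the first time `τ` at which `M` reaches `1`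
  have hinvariant : ∀ n ≤ N, μ (beforeCrossing M (n + 1))ᶜ
      + ∫⁻ ω in beforeCrossing M (n + 1), M n ω ∂μ ≤ ∫⁻ ω, M 0 ω ∂μ := by
    intro n hn
    induction n with
    | zero => simpa using measure_compl_add_setLIntegral_beforeCrossing_succ_le (μ := μ) (hMm 0)
    | succ n ih =>
      have hn' : n < N := hn
      have hS : MeasurableSet[ℱ n] (beforeCrossing M (n + 1)) := by
        rw [beforeCrossing_succ]
        exact (measurableSet_beforeCrossing hM n).inter (measurableSet_lt (hM n) measurable_const)
      calc _ ≤ μ (beforeCrossing M (n + 1))ᶜ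
              + ∫⁻ ω in beforeCrossing M (n + 1), M (n + 1) ω ∂μ :=
            measure_compl_add_setLIntegral_beforeCrossing_succ_le (hMm _)
        _ ≤ μ (beforeCrossing M (n + 1))ᶜ + ∫⁻ ω in beforeCrossing M (n + 1), M n ω ∂μ := by
            rw [hrec n hn']
            exact add_le_add le_rfl <| setLIntegral_mul_le_of_indep (ℱ.le n) hS (hM n) (hY n hn')
              (hindep n hn') (hmean n hn')
        _ ≤ ∫⁻ ω, M 0 ω ∂μ := ih hn'.le
  rw [← compl_beforeCrossing_succ]
  exact le_trans le_self_add (hinvariant N le_rfl)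

namespace Filtration

variable {β : Type*} [MeasurableSpace β] {X : ℕ → Ω → β} {hX : ∀ t, Measurable (X t)}
  {s : ℕ → Set ℕ} {hs : Monotone s} {t : ℕ}

def ofWindows (X : ℕ → Ω → β) (hX : ∀ t, Measurable (X t)) (s : ℕ → Set ℕ) (hs : Monotone s) :
    Filtration ℕ m0 where
  seq n := ⨆ t ∈ s n, MeasurableSpace.comap (X t) inferInstance
  mono' _ _ h := biSup_mono fun _ ht => hs h ht
  le' _ := iSup₂_le fun t _ => (hX t).comap_le

theorem measurable_ofWindows (ht : t ∈ s n) : Measurable[ofWindows X hX s hs n] (X t) :=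
  (comap_measurable (X t)).mono (le_iSup₂
    (f := fun t (_ : t ∈ s n) => MeasurableSpace.comap (X t) inferInstance) t ht) le_rfl

theorem indep_ofWindows_comp {γ : Type*} [MeasurableSpace γ] (hind : iIndepFun X μ)
    (ht : t ∉ s n) {h : β → γ} (hh : Measurable h) :
    Indep (ofWindows X hX s hs n) (MeasurableSpace.comap (h ∘ X t) inferInstance) μ := by
  have hdisj := indep_iSup_of_disjoint (fun t => (hX t).comap_le) hind.iIndep
    (Set.disjoint_singleton_right.2 ht)
  simp only [Set.mem_singleton_iff, iSup_iSup_eq_left] at hdisj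
  exact indep_of_indep_of_le_right hdisj (hh.comp (comap_measurable (X t))).comap_le

end Filtration

end MeasureTheory

section DelayBound

variable {Ω : Type*} (R : ℕ → Ω → ℝ) (θ V T : ℝ) (i k : ℕ)

/-- `exp (θ (A(i - n, i) - C(i - n, i + k)))` in the notation of the queueing model. -/
noncomputable def surplusExp (n : ℕ) (ω : Ω) : ℝ≥0∞ :=
  ENNReal.ofReal (Real.exp (θ * (V * n * T - ∑ t ∈ Ico (i - n) (i + k), R t ω * T)))

theorem monotone_Ico_sub : Monotone fun n => Set.Ico (i - n) (i + k) :=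
  fun _ _ h => Set.Ico_subset_Ico (by omega) le_rfl

variable {R θ V T i k}

theorem surplusExp_zero (ω : Ω) :
    surplusExp R θ V T i k 0 ω =
      ∏ t ∈ Ico i (i + k), ENNReal.ofReal (Real.exp (-θ * R t ω * T)) := by
  rw [surplusExp, ← ENNReal.ofReal_prod_of_nonneg fun _ _ => (Real.exp_pos _).le, ← Real.exp_sum,
    Nat.sub_zero, Nat.cast_zero, mul_zero, zero_mul, zero_sub, mul_neg, Finset.mul_sum]
  simp only [← Finset.sum_neg_distrib, ← mul_assoc, neg_mul]

theorem surplusExp_succ {n : ℕ} (hn : n < i) :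
    surplusExp R θ V T i k (n + 1) = surplusExp R θ V T i k n *
      fun ω => ENNReal.ofReal (Real.exp (θ * V * T)) *
        ENNReal.ofReal (Real.exp (-θ * R (i - (n + 1)) ω * T)) := by
  ext ω
  simp only [surplusExp, Pi.mul_apply]
  rw [← ENNReal.ofReal_mul (Real.exp_pos _).le, ← ENNReal.ofReal_mul (Real.exp_pos _).le,
    ← Real.exp_add, ← Real.exp_add, sum_eq_sum_Ico_succ_bot (by omega : i - (n + 1) < i + k),
    show i - (n + 1) + 1 = i - n by omega]
  push_cast
  ring_nf

theorem exists_one_le_surplusExp_of_inf'_lt {ω : Ω} (hθ : 0 ≤ θ) (hV : 0 ≤ V) (hT : 0 ≤ T)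
    (hR : ∀ t, 0 ≤ R t ω)
    (h : (range (i + k + 1)).inf' nonempty_range_add_one
      (fun j => V * j * T + ∑ t ∈ Ico j (i + k), R t ω * T) < V * i * T) :
    ∃ n ≤ i, 1 ≤ surplusExp R θ V T i k n ω := by
  obtain ⟨j, -, hj⟩ := (inf'_lt_iff _).1 h
  have hservice : 0 ≤ ∑ t ∈ Ico j (i + k), R t ω * T :=
    sum_nonneg fun t _ => mul_nonneg (hR t) hT
  have hji : j ≤ i := by
    by_contra! hij
    have : V * i * T ≤ V * j * T := by gcongr
    linarith
  refine ⟨i - j, Nat.sub_le i j, ?_⟩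
  rw [surplusExp, Nat.sub_sub_self hji, ENNReal.one_le_ofReal, Real.one_le_exp_iff,
    Nat.cast_sub hji]
  have : V * ((i : ℝ) - j) * T = V * i * T - V * j * T := by ring
  exact mul_nonneg hθ (by linarith)

variable [MeasurableSpace Ω]

theorem adapted_surplusExp (hR : ∀ t, Measurable (R t)) :
    Adapted (Filtration.ofWindows R hR _ (monotone_Ico_sub i k)) (surplusExp R θ V T i k) :=
  fun n => ENNReal.measurable_ofReal.comp <| Real.measurable_exp.comp <| measurable_const.mul <|
    measurable_const.sub <| Finset.measurable_sum _ fun t ht =>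
      (Filtration.measurable_ofWindows (by simpa using ht)).mul_const T

theorem lintegral_ofReal_exp_eq_ofReal_integral {μ : Measure Ω} [IsFiniteMeasure μ] (hθ : 0 ≤ θ) (hT : 0 ≤ T)
    (hR : ∀ ω, 0 ≤ R 0 ω) (hident : ∀ t, IdentDistrib (R t) (R 0) μ μ) (t : ℕ) :
    ∫⁻ ω, ENNReal.ofReal (Real.exp (-θ * R t ω * T)) ∂μ =
      ENNReal.ofReal (∫ ω, Real.exp (-θ * R 0 ω * T) ∂μ) := by
  have hg : Measurable fun x => Real.exp (-θ * x * T) := by fun_prop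
  have hint : Integrable (fun ω => Real.exp (-θ * R 0 ω * T)) μ := by
    refine Integrable.of_bound
      (hg.comp_aemeasurable (hident 0).aemeasurable_snd).aestronglyMeasurable 1
      (ae_of_all _ fun ω => ?_)
    rw [Real.norm_eq_abs, abs_of_pos (Real.exp_pos _), Real.exp_le_one_iff]
    have := mul_nonneg (mul_nonneg hθ (hR ω)) hT
    linarith
  rw [ofReal_integral_eq_lintegral_ofReal hint (ae_of_all _ fun _ => (Real.exp_pos _).le)]
  exact ((hident t).comp (ENNReal.measurable_ofReal.comp hg)).lintegral_eq

theorem lintegral_surplusExp_zero {μ : Measure Ω} {a : ℝ≥0∞} (hR : ∀ t, Measurable (R t))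
    (hindep : iIndepFun R μ)
    (hmean : ∀ t, ∫⁻ ω, ENNReal.ofReal (Real.exp (-θ * R t ω * T)) ∂μ = a) :
    ∫⁻ ω, surplusExp R θ V T i k 0 ω ∂μ = a ^ k := by
  have hg : Measurable fun x => ENNReal.ofReal (Real.exp (-θ * x * T)) := by fun_prop
  simp_rw [surplusExp_zero]
  rw [lintegral_prod_eq_prod_lintegral_of_indepFun _
    (fun t ω => ENNReal.ofReal (Real.exp (-θ * R t ω * T))) (hindep.comp _ fun _ => hg)
    fun t => hg.comp (hR t)]
  simp only [hmean, prod_const, Nat.card_Ico, add_tsub_cancel_left]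

end DelayBound

theorem exp_mul_le_one_of_le_neg_log {a x : ℝ} (hx : 0 ≤ x) (h : a ≤ -Real.log x) :
    Real.exp a * x ≤ 1 := by
  rcases hx.eq_or_lt with rfl | hx
  · simp
  calc Real.exp a * x ≤ Real.exp (-Real.log x) * x := by gcongr
    _ = 1 := by rw [Real.exp_neg, Real.exp_log hx, inv_mul_cancel₀ hx.ne']

/-- Theorem 1 of the paper: statistical delay-violation bound. If the video coding
rate `V` satisfies the stability condition w.r.t. the effective capacity with QoS
exponent `θ`, then the probability that the arrivals up to block `i` exceed the
departures up to block `i + k` is bounded by `(E[e^{-θ R₀ T}])^k`. -/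
theorem delay_violation_bound
    {Ω : Type*} [MeasurableSpace Ω] (μ : Measure Ω) [IsProbabilityMeasure μ]
    (T V θ : ℝ) (hT : 0 < T) (hV : 0 < V) (hθ : 0 < θ)
    (R : ℕ → Ω → ℝ)
    (hRmeas : ∀ t, Measurable (R t))
    (hRnonneg : ∀ t ω, 0 ≤ R t ω)
    (hindep : iIndepFun R μ)
    (hident : ∀ t, IdentDistrib (R t) (R 0) μ μ)
    (A : ℕ → ℕ → ℝ) (hA : ∀ j i, A j i = V * ((i : ℝ) - (j : ℝ)) * T)
    (C : ℕ → ℕ → Ω → ℝ) (hC : ∀ j i ω, C j i ω = ∑ t ∈ Finset.Ico j i, R t ω * T)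
    (Astar : ℕ → Ω → ℝ)
    (hAstar : ∀ m ω, Astar m ω =
      (Finset.range (m + 1)).inf' Finset.nonempty_range_add_one (fun j => A 0 j + C j m ω))
    (hstable : V ≤ - Real.log (∫ ω, Real.exp (-θ * R 0 ω * T) ∂μ) / (θ * T)) :
    ∀ i k : ℕ,
      (μ {ω | A 0 i > Astar (i + k) ω}).toReal ≤
        (∫ ω, Real.exp (-θ * R 0 ω * T) ∂μ) ^ k := by
  intro i k
  set φ := ∫ ω, Real.exp (-θ * R 0 ω * T) ∂μ
  have hφ : 0 ≤ φ := integral_nonneg fun _ => (Real.exp_pos _).le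
  have hmean : ∀ t, ∫⁻ ω, ENNReal.ofReal (Real.exp (-θ * R t ω * T)) ∂μ = ENNReal.ofReal φ :=
    lintegral_ofReal_exp_eq_ofReal_integral hθ.le hT.le (hRnonneg 0) hident
  have hstab : ENNReal.ofReal (Real.exp (θ * V * T)) * ENNReal.ofReal φ ≤ 1 := by
    rw [← ENNReal.ofReal_mul (Real.exp_pos _).le, ENNReal.ofReal_le_one]
    refine exp_mul_le_one_of_le_neg_log hφ ?_
    linarith [(le_div_iff₀ (mul_pos hθ hT)).1 hstable]
  have hevent : {ω | A 0 i > Astar (i + k) ω} ⊆ {ω | ∃ n ≤ i, 1 ≤ surplusExp R θ V T i k n ω} :=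
    fun ω hω => exists_one_le_surplusExp_of_inf'_lt hθ.le hV.le hT.le (hRnonneg · ω)
      (by simpa [hAstar, hA, hC] using hω)
  have hg : Measurable fun x => ENNReal.ofReal (Real.exp (θ * V * T)) *
      ENNReal.ofReal (Real.exp (-θ * x * T)) := by fun_prop
  have hville := measure_exists_one_le_le_lintegral (μ := μ) (N := i)
    (M := surplusExp R θ V T i k) (Y := fun n ω => ENNReal.ofReal (Real.exp (θ * V * T)) *
      ENNReal.ofReal (Real.exp (-θ * R (i - (n + 1)) ω * T))) (adapted_surplusExp hRmeas)
    (fun n _ => hg.comp (hRmeas (i - (n + 1)))) (fun n hn => surplusExp_succ hn)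
    (fun n hn => Filtration.indep_ofWindows_comp hindep (by rw [Set.mem_Ico]; omega) hg)
    (fun _ _ => by rw [lintegral_const_mul' _ _ ENNReal.ofReal_ne_top, hmean]; exact hstab)
  rw [lintegral_surplusExp_zero hRmeas hindep hmean, ← ENNReal.ofReal_pow hφ] at hville
  exact ENNReal.toReal_le_of_le_ofReal (pow_nonneg hφ k) ((measure_mono hevent).trans hville)
end

section
/- Let N ≥ 1, let B > 0, and for each n = 1,…,N let f_n : [0,∞) → ℝ be continuous, strictly increasing, and satisfy f_n(0) = 0. Let S = { b ∈ ℝ^N : b_n ≥ 0 for all n and Σ_{n=1}^N b_n ≤ B }. If b* ∈ S maximizes min_{1≤n≤N} f_n(b_n) over S, i.e. min_n f_n(b*_n) ≥ min_n f_n(b_n) for every b ∈ S, then Σ_{n=1}^N b*_n = B and f_{n_1}(b*_{n_1}) = f_{n_2}(b*_{n_2}) for all n_1, n_2. -/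
/-!
If some budget is left over, spreading it evenly over all users strictly raises every rate,
contradicting optimality; so any allocation whose rates all reach the optimal value `K` exhausts the
budget. If some user `m` had a rate above `K`, continuity lets us lower its bandwidth slightly while
keeping its rate above `K`; the result is such an allocation with total strictly below `B`.
-/

open Finset Filter Topology Set

section MaxMin

variable {ι : Type*} [Fintype ι] {f : ι → ℝ → ℝ}

noncomputable def minRate [Nonempty ι] (f : ι → ℝ → ℝ) (b : ι → ℝ) : ℝ :=
  univ.inf' univ_nonempty fun n => f n (b n)

lemma minRate_le_rate [Nonempty ι] (b : ι → ℝ) (n : ι) : minRate f b ≤ f n (b n) :=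
  inf'_le _ (mem_univ n)

lemma exists_sum_eq_forall_rate_lt [Nonempty ι] (hmono : ∀ n, StrictMonoOn (f n) (Ici 0))
    {a : ι → ℝ} (ha : ∀ n, 0 ≤ a n) {B : ℝ} (hsum : ∑ n, a n < B) :
    ∃ b : ι → ℝ, (∀ n, 0 ≤ b n) ∧ ∑ n, b n = B ∧ ∀ n, f n (a n) < f n (b n) := by
  have hcard : (0 : ℝ) < Fintype.card ι := by exact_mod_cast Fintype.card_pos
  set c := (B - ∑ n, a n) / Fintype.card ι
  have hc : 0 < c := div_pos (sub_pos.2 hsum) hcard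
  refine ⟨fun n => a n + c, fun n => by linarith [ha n], ?_, fun n => ?_⟩
  · rw [sum_add_distrib, sum_const, card_univ, nsmul_eq_mul, mul_div_cancel₀ _ hcard.ne']
    ring
  · exact hmono n (ha n) (by simp only [Set.mem_Ici]; linarith [ha n]) (by linarith)

variable [Nonempty ι] {B : ℝ} {bstar : ι → ℝ}

lemma le_sum_of_forall_minRate_le (hmono : ∀ n, StrictMonoOn (f n) (Ici 0))
    (hopt : ∀ b : ι → ℝ, (∀ n, 0 ≤ b n) → ∑ n, b n ≤ B → minRate f b ≤ minRate f bstar)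
    {a : ι → ℝ} (ha : ∀ n, 0 ≤ a n) (hrate : ∀ n, minRate f bstar ≤ f n (a n)) :
    B ≤ ∑ n, a n := by
  by_contra! hsum
  obtain ⟨b, hb, hbsum, hlt⟩ := exists_sum_eq_forall_rate_lt hmono ha hsum
  have : minRate f bstar < minRate f b :=
    (lt_inf'_iff _).2 fun n _ => (hrate n).trans_lt (hlt n)
  exact (hopt b hb hbsum.le).not_gt this

lemma exists_mem_Ico_lt_apply {g : ℝ → ℝ} {y K : ℝ} (hg : ContinuousWithinAt g (Ici 0) y)
    (hy : 0 < y) (hK : K < g y) : ∃ x ∈ Ico 0 y, K < g x := by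
  have hg' : Tendsto g (𝓝[<] y) (𝓝 (g y)) :=
    (hg.continuousAt (Ici_mem_nhds hy)).tendsto.mono_left nhdsWithin_le_nhds
  obtain ⟨x, hKx, hx0, hxy⟩ := ((hg'.eventually (lt_mem_nhds hK)).and
    (((eventually_gt_nhds hy).filter_mono nhdsWithin_le_nhds).and self_mem_nhdsWithin)).exists
  exact ⟨x, ⟨hx0.le, hxy⟩, hKx⟩

lemma rate_eq_minRate (hcont : ∀ n, ContinuousOn (f n) (Ici 0))
    (hmono : ∀ n, StrictMonoOn (f n) (Ici 0)) (hzero : ∀ n, f n 0 = 0)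
    (hbstar_nonneg : ∀ n, 0 ≤ bstar n) (hbstar_sum : ∑ n, bstar n ≤ B)
    (hopt : ∀ b : ι → ℝ, (∀ n, 0 ≤ b n) → ∑ n, b n ≤ B → minRate f b ≤ minRate f bstar)
    (m : ι) : f m (bstar m) = minRate f bstar := by
  set K := minRate f bstar
  refine le_antisymm ?_ (minRate_le_rate bstar m)
  by_contra! hK
  classical
  have hrate_nonneg : ∀ n, 0 ≤ f n (bstar n) := fun n =>
    hzero n ▸ (hmono n).monotoneOn self_mem_Ici (hbstar_nonneg n) (hbstar_nonneg n)
  have hK_nonneg : 0 ≤ K := le_inf' _ _ fun n _ => hrate_nonneg n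
  have hm_pos : 0 < bstar m :=
    (hbstar_nonneg m).lt_of_ne fun h => by rw [← h, hzero] at hK; linarith
  obtain ⟨x, ⟨hx0, hxm⟩, hKx⟩ :=
    exists_mem_Ico_lt_apply (hcont m _ (hbstar_nonneg m)) hm_pos hK
  set a := Function.update bstar m x
  have ha_nonneg : ∀ n, 0 ≤ a n := fun n => by
    rcases eq_or_ne n m with rfl | h
    · simp [a, hx0]
    · simpa [a, h] using hbstar_nonneg n
  have ha_rate : ∀ n, K ≤ f n (a n) := fun n => by
    rcases eq_or_ne n m with rfl | h
    · simp [a, hKx.le]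
    · simpa [a, h] using minRate_le_rate bstar n
  have ha_sum : ∑ n, a n < ∑ n, bstar n :=
    sum_lt_sum (fun n _ => by
        rcases eq_or_ne n m with rfl | h
        · simp [a, hxm.le]
        · simp [a, h])
      ⟨m, mem_univ m, by simpa [a] using hxm⟩
  linarith [le_sum_of_forall_minRate_le hmono hopt ha_nonneg ha_rate]

end MaxMin

theorem maxmin_allocation_full_bandwidth_equal_rates_general
    (N : ℕ) (hN : 1 ≤ N) (B : ℝ)
    (f : Fin N → ℝ → ℝ)
    (hcont : ∀ n, ContinuousOn (f n) (Set.Ici 0))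
    (hmono : ∀ n, StrictMonoOn (f n) (Set.Ici 0))
    (hzero : ∀ n, f n 0 = 0)
    (bstar : Fin N → ℝ)
    (hbstar_nonneg : ∀ n, 0 ≤ bstar n)
    (hbstar_sum : ∑ n, bstar n ≤ B)
    (hopt : ∀ b : Fin N → ℝ, (∀ n, 0 ≤ b n) → ∑ n, b n ≤ B →
      Finset.univ.inf' (⟨⟨0, hN⟩, Finset.mem_univ _⟩ : (Finset.univ : Finset (Fin N)).Nonempty)
          (fun n => f n (b n)) ≤
        Finset.univ.inf' (⟨⟨0, hN⟩, Finset.mem_univ _⟩ : (Finset.univ : Finset (Fin N)).Nonempty)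
          (fun n => f n (bstar n))) :
    (∑ n, bstar n = B) ∧ ∀ n₁ n₂ : Fin N, f n₁ (bstar n₁) = f n₂ (bstar n₂) := by
  have : Nonempty (Fin N) := ⟨⟨0, hN⟩⟩
  have hrate : ∀ m, f m (bstar m) = minRate f bstar :=
    rate_eq_minRate hcont hmono hzero hbstar_nonneg hbstar_sum hopt
  exact ⟨hbstar_sum.antisymm
      (le_sum_of_forall_minRate_le hmono hopt hbstar_nonneg fun n => (hrate n).ge),
    fun n₁ n₂ => (hrate n₁).trans (hrate n₂).symm⟩

/-- Theorem 2 of the paper: at any max-min optimal bandwidth allocation, the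
total bandwidth is fully used and all users attain the same coding rate. -/
theorem maxmin_allocation_full_bandwidth_equal_rates
    (N : ℕ) (hN : 1 ≤ N) (B : ℝ) (hB : 0 < B)
    (f : Fin N → ℝ → ℝ)
    (hcont : ∀ n, ContinuousOn (f n) (Set.Ici 0))
    (hmono : ∀ n, StrictMonoOn (f n) (Set.Ici 0))
    (hzero : ∀ n, f n 0 = 0)
    (bstar : Fin N → ℝ)
    (hbstar_nonneg : ∀ n, 0 ≤ bstar n)
    (hbstar_sum : ∑ n, bstar n ≤ B)
    (hopt : ∀ b : Fin N → ℝ, (∀ n, 0 ≤ b n) → ∑ n, b n ≤ B →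
      Finset.univ.inf' (⟨⟨0, hN⟩, Finset.mem_univ _⟩ : (Finset.univ : Finset (Fin N)).Nonempty)
          (fun n => f n (b n)) ≤
        Finset.univ.inf' (⟨⟨0, hN⟩, Finset.mem_univ _⟩ : (Finset.univ : Finset (Fin N)).Nonempty)
          (fun n => f n (bstar n))) :
    (∑ n, bstar n = B) ∧ ∀ n₁ n₂ : Fin N, f n₁ (bstar n₁) = f n₂ (bstar n₂) :=
  maxmin_allocation_full_bandwidth_equal_rates_general N hN B f hcont hmono hzero bstar
    hbstar_nonneg hbstar_sum hopt
end

section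
/- Let θ > 0, T > 0 and c > 0, and let h be a nonnegative random variable with Pr{h > 0} > 0. Then the function B ↦ −(1/(θT)) · ln E[ exp( −θ T B log₂(1 + c·h/B) ) ] is strictly increasing on (0, ∞). -/
open MeasureTheory Real Set

/-! Writing `x = a / B`, the rate is `B log (1 + a / B) = a · (log (1 + x) / x)`, and
`log (1 + x) / x` is the slope of the secant of the concave function `log` through `1`, hence
strictly decreasing in `x`. So the rate `B log₂ (1 + c h / B)` increases with `B`, strictly
wherever `h > 0`, an event of positive probability; therefore `E[exp (-θ T R(B))]` strictly
decreases, and the factor `-1/(θT) < 0` turns this into strict increase. -/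

theorem strictAntiOn_log_one_add_div_self :
    StrictAntiOn (fun x : ℝ => log (1 + x) / x) (Ioi 0) := by
  intro x (hx : 0 < x) y (hy : 0 < y) hxy
  have hx1 : 1 < 1 + x := lt_add_of_pos_right 1 hx
  have hy1 : 1 < 1 + y := lt_add_of_pos_right 1 hy
  have hslope := strictConcaveOn_log_Ioi.secant_strict_mono (mem_Ioi.2 one_pos)
    (mem_Ioi.2 (one_pos.trans hx1)) (mem_Ioi.2 (one_pos.trans hy1)) hx1.ne' hy1.ne'
    (add_lt_add_right hxy 1)
  simpa only [log_one, sub_zero, add_sub_cancel_left] using hslope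

theorem strictMonoOn_mul_log_one_add_div {a : ℝ} (ha : 0 < a) :
    StrictMonoOn (fun B : ℝ => B * log (1 + a / B)) (Ioi 0) := by
  intro B₁ (hB₁ : 0 < B₁) B₂ (hB₂ : 0 < B₂) hB
  have hslope := strictAntiOn_log_one_add_div_self (mem_Ioi.2 (div_pos ha hB₂))
    (mem_Ioi.2 (div_pos ha hB₁)) (div_lt_div_of_pos_left ha hB₁ hB)
  have hrw : ∀ B : ℝ, 0 < B → B * log (1 + a / B) = a * (log (1 + a / B) / (a / B)) := by
    intro B hB; field_simp
  simp only [hrw B₁ hB₁, hrw B₂ hB₂]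
  exact mul_lt_mul_of_pos_left hslope ha

theorem strictMonoOn_mul_logb_one_add_div {b a : ℝ} (hb : 1 < b) (ha : 0 < a) :
    StrictMonoOn (fun B : ℝ => B * logb b (1 + a / B)) (Ioi 0) := by
  intro B₁ hB₁ B₂ hB₂ hB
  simp only [logb, mul_div_assoc']
  exact div_lt_div_of_pos_right (strictMonoOn_mul_log_one_add_div ha hB₁ hB₂ hB) (log_pos hb)

theorem monotoneOn_mul_logb_one_add_div {b a : ℝ} (hb : 1 < b) (ha : 0 ≤ a) :
    MonotoneOn (fun B : ℝ => B * logb b (1 + a / B)) (Ioi 0) := by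
  rcases ha.eq_or_lt with rfl | ha
  · simp [MonotoneOn]
  · exact (strictMonoOn_mul_logb_one_add_div hb ha).monotoneOn

theorem mul_logb_one_add_div_nonneg {b a B : ℝ} (hb : 1 < b) (ha : 0 ≤ a) (hB : 0 ≤ B) :
    0 ≤ B * logb b (1 + a / B) :=
  mul_nonneg hB (logb_nonneg hb (le_add_of_nonneg_right (div_nonneg ha hB)))

theorem integral_lt_integral_of_ae_le_of_measure_setOf_lt_pos {α : Type*} [MeasurableSpace α]
    {μ : Measure α} {f g : α → ℝ} (hf : Integrable f μ) (hg : Integrable g μ)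
    (hle : f ≤ᵐ[μ] g) (hlt : 0 < μ {x | f x < g x}) :
    ∫ x, f x ∂μ < ∫ x, g x ∂μ := by
  rw [← sub_pos, ← integral_sub hg hf, integral_pos_iff_support_of_nonneg_ae
    (hle.mono fun x => sub_nonneg.2) (hg.sub hf)]
  exact hlt.trans_le (measure_mono fun x hx => (sub_pos.2 hx).ne')

section ExpNeg

variable {Ω : Type*} [MeasurableSpace Ω] {μ : Measure Ω} [IsFiniteMeasure μ] {X Y : Ω → ℝ}

theorem integrable_exp_neg_of_nonneg (hX : AEMeasurable X μ) (hX0 : 0 ≤ᵐ[μ] X) :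
    Integrable (fun ω => exp (-X ω)) μ :=
  .of_bound (hX.neg.exp).aestronglyMeasurable 1 <| hX0.mono fun ω hω => by
    simpa [abs_of_pos (exp_pos _)] using hω

theorem log_integral_exp_neg_lt_of_ae_le (hX : AEMeasurable X μ) (hY : AEMeasurable Y μ)
    (hX0 : 0 ≤ᵐ[μ] X) (hXY : X ≤ᵐ[μ] Y) (hlt : 0 < μ {ω | X ω < Y ω}) :
    log (∫ ω, exp (-Y ω) ∂μ) < log (∫ ω, exp (-X ω) ∂μ) := by
  have : NeZero μ := ⟨by rintro rfl; simp at hlt⟩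
  have hY0 : 0 ≤ᵐ[μ] Y := (hX0.and hXY).mono fun ω hω => hω.1.trans hω.2
  have hintX := integrable_exp_neg_of_nonneg hX hX0
  have hintY := integrable_exp_neg_of_nonneg hY hY0
  refine log_lt_log (integral_exp_pos hintY) ?_
  refine integral_lt_integral_of_ae_le_of_measure_setOf_lt_pos hintY hintX
    (hXY.mono fun ω hω => exp_le_exp.2 (neg_le_neg hω)) ?_
  simpa only [exp_lt_exp, neg_lt_neg_iff] using hlt

end ExpNeg

/-- The effective capacity `B ↦ -(1/(θT)) ln E[exp(-θ T B log₂(1 + c h / B))]`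
is strictly increasing in the allocated bandwidth `B` on `(0, ∞)`. -/
theorem effective_capacity_strictMonoOn_bandwidth
    {Ω : Type*} [MeasurableSpace Ω] (μ : Measure Ω) [IsProbabilityMeasure μ]
    (θ T c : ℝ) (hθ : 0 < θ) (hT : 0 < T) (hc : 0 < c)
    (h : Ω → ℝ) (hmeas : Measurable h) (hnonneg : ∀ ω, 0 ≤ h ω)
    (hpos : 0 < μ {ω | 0 < h ω}) :
    StrictMonoOn
      (fun B : ℝ =>
        -(1 / (θ * T)) *
          Real.log (∫ ω, Real.exp (-(θ * T * (B * Real.logb 2 (1 + c * h ω / B)))) ∂μ))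
      (Set.Ioi 0) := by
  intro B₁ hB₁ B₂ hB₂ hB
  have hθT : 0 < θ * T := mul_pos hθ hT
  have hch : ∀ ω, 0 ≤ c * h ω := fun ω => mul_nonneg hc.le (hnonneg ω)
  have hrate : ∀ B, Measurable fun ω => θ * T * (B * logb 2 (1 + c * h ω / B)) := by
    intro B; simp only [logb]; fun_prop
  have hle : ∀ ω, B₁ * logb 2 (1 + c * h ω / B₁) ≤ B₂ * logb 2 (1 + c * h ω / B₂) :=
    fun ω => monotoneOn_mul_logb_one_add_div one_lt_two (hch ω) hB₁ hB₂ hB.le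
  have hlt : {ω | 0 < h ω} ⊆ {ω | θ * T * (B₁ * logb 2 (1 + c * h ω / B₁))
      < θ * T * (B₂ * logb 2 (1 + c * h ω / B₂))} := fun ω hω =>
    mul_lt_mul_of_pos_left
      (strictMonoOn_mul_logb_one_add_div one_lt_two (mul_pos hc hω) hB₁ hB₂ hB) hθT
  refine mul_lt_mul_of_neg_left ?_ (neg_neg_of_pos (one_div_pos.2 hθT))
  exact log_integral_exp_neg_lt_of_ae_le (hrate B₁).aemeasurable (hrate B₂).aemeasurable
    (.of_forall fun ω => mul_nonneg hθT.le
      (mul_logb_one_add_div_nonneg one_lt_two (hch ω) (le_of_lt hB₁)))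
    (.of_forall fun ω => mul_le_mul_of_nonneg_left (hle ω) hθT.le)
    (hpos.trans_le (measure_mono hlt))
end
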